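/- Let L ≥ 1, x̄ > 0, u > 0, u_n > 0, c̄ : {1,…,L+1} → (0,1], and δ > 0. Consider two allocations: x¹ with x¹_l = x̄ for l ≤ L and x¹_{L+1} = x̂, and x² with x²_l = x̄ for l ≤ L−1, x²_L = x̄ − δ·c̄_L, x²_{L+1} = x̂ + δ·c̄_{L+1}, where 0 ≤ x̂ and x̂ + δ·c̄_{L+1} ≤ x̄ and δ·c̄_L ≤ x̄. With utilities U_l(x) = u·min(x, x̄) for l ≤ L and U_{L+1}(x) = u_n·min(x, x̄), if u_n·c̄_{L+1} < u·min_{l ∈ {1,…,L+1}} c̄_l, then Σ_{l=1}^{L+1} U_l(x¹_l) − Σ_{l=1}^{L+1} U_l(x²_l) ≥ δ·(u·min_l c̄_l − u_n·c̄_{L+1}) > 0. -/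

import Mathlib

/-! Only link `L` and the new link `L + 1` change their allocation, and both stay below the cap
`x̄`, where the capped utility `w * min x x̄` is linear. Hence the utility drops by exactly
`δ * (u * c̄_L - u_n * c̄_{L+1})`, which is at least `δ * (u * min_l c̄_l - u_n * c̄_{L+1})`. -/

theorem mul_min_sub_mul_min_of_le {α : Type*} [Ring α] [LinearOrder α] (w : α) {x y c : α}
    (hxy : x ≤ y) (hyc : y ≤ c) : w * min y c - w * min x c = w * (y - x) := by
  rw [min_eq_left hyc, min_eq_left (hxy.trans hyc), mul_sub]

/-- Exchange-argument computation in Theorem 1: shifting probability mass δ from a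
schedule serving existing link L to one serving the new link L+1 strictly decreases
total utility under the condition u_n·cbar_{L+1} < u·min_l cbar_l. -/
theorem stmt9 (L : ℕ) (hL : 1 ≤ L) (xbar u un δ xhat : ℝ)
    (hu : 0 < u) (hδ : 0 < δ)
    (cbar : Fin (L + 1) → ℝ) (hc : ∀ l, cbar l ∈ Set.Ioc (0 : ℝ) 1)
    (hfeas1 : xhat + δ * cbar (Fin.last L) ≤ xbar)
    (x1 x2 : Fin (L + 1) → ℝ)
    (hx1 : ∀ l : Fin (L + 1), l.val < L → x1 l = xbar)
    (hx1n : x1 (Fin.last L) = xhat)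
    (hx2 : ∀ l : Fin (L + 1), l.val < L - 1 → x2 l = xbar)
    (hx2L : x2 ⟨L - 1, by omega⟩ = xbar - δ * cbar ⟨L - 1, by omega⟩)
    (hx2n : x2 (Fin.last L) = xhat + δ * cbar (Fin.last L))
    (U : Fin (L + 1) → ℝ → ℝ)
    (hU : ∀ l : Fin (L + 1), l.val < L → ∀ x, U l x = u * min x xbar)
    (hUn : ∀ x, U (Fin.last L) x = un * min x xbar)
    (hcond : un * cbar (Fin.last L) <
      u * Finset.univ.inf' (Finset.univ_nonempty_iff.mpr ⟨⟨0, by omega⟩⟩) cbar) :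
    ∑ l, U l (x1 l) - ∑ l, U l (x2 l) ≥
      δ * (u * Finset.univ.inf' (Finset.univ_nonempty_iff.mpr ⟨⟨0, by omega⟩⟩) cbar
        - un * cbar (Fin.last L)) ∧
    0 < δ * (u * Finset.univ.inf' (Finset.univ_nonempty_iff.mpr ⟨⟨0, by omega⟩⟩) cbar
        - un * cbar (Fin.last L)) := by
  set m := Finset.univ.inf' (Finset.univ_nonempty_iff.mpr ⟨⟨0, by omega⟩⟩) cbar
  set k : Fin (L + 1) := ⟨L - 1, by omega⟩
  have hk : k ≠ Fin.last L := by simp [k, Fin.ext_iff]; omega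
  have hδc : ∀ l, 0 ≤ δ * cbar l := fun l => mul_nonneg hδ.le (hc l).1.le
  have hkL : k.val < L := by simp [k]; omega
  have hlost : U k (x1 k) - U k (x2 k) = u * (δ * cbar k) := by
    rw [hx1 k hkL, hx2L, hU k hkL, hU k hkL,
      mul_min_sub_mul_min_of_le u (by linarith [hδc k]) le_rfl, sub_sub_cancel]
  have hgained : U (Fin.last L) (x1 (Fin.last L)) - U (Fin.last L) (x2 (Fin.last L)) =
      -(un * (δ * cbar (Fin.last L))) := by
    rw [hx1n, hx2n, hUn, hUn, ← neg_sub,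
      mul_min_sub_mul_min_of_le un (by linarith [hδc (Fin.last L)]) hfeas1, add_sub_cancel_left]
  have hunchanged : ∀ l, l ≠ k ∧ l ≠ Fin.last L → U l (x1 l) - U l (x2 l) = 0 := by
    rintro l ⟨hlk, hlL⟩
    have hl : l.val < L - 1 := by
      simp only [k, ne_eq, Fin.ext_iff, Fin.val_last] at hlk hlL; omega
    rw [hx1 l (by omega), hx2 l hl, sub_self]
  have hdiff : ∑ l, U l (x1 l) - ∑ l, U l (x2 l) =
      δ * (u * cbar k - un * cbar (Fin.last L)) := by
    rw [← Finset.sum_sub_distrib, Fintype.sum_eq_add k (Fin.last L) hk hunchanged, hlost, hgained]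
    ring
  have hm : u * m ≤ u * cbar k :=
    mul_le_mul_of_nonneg_left (Finset.inf'_le _ (Finset.mem_univ k)) hu.le
  refine ⟨?_, mul_pos hδ (by linarith)⟩
  rw [hdiff, ge_iff_le]
  exact mul_le_mul_of_nonneg_left (by linarith) hδ.le
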